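/- arXiv:2404.10914 — 2 statements merged into one kernel-verified Lean document; each statement's English description precedes it below -/
import Mathlib

section
/- Let n, m, p be positive integers. For all k ≥ 0, let A_k ∈ ℝ^{n×n} be nonsingular, B_k ∈ ℝ^{n×m}, C_k ∈ ℝ^{p×n}, Γ_k ∈ ℝ^{p×p} positive definite, u_k ∈ ℝ^m, y_k ∈ ℝ^p; let P_0 ∈ ℝ^{n×n} be positive definite and x̂_0 ∈ ℝ^n. For all k ≥ 0, let F_k ∈ ℝ^{n×n} be positive semidefinite with F_k ≺ Φ_{0,k}ᵀ P_0^{-1} Φ_{0,k} + Σ_{i=0}^{k-1} ( Φ_{i+1,k}ᵀ C_iᵀ Γ_i^{-1} C_i Φ_{i+1,k} − Φ_{i,k}ᵀ F_i Φ_{i,k} ). Then for every k ≥ 0 the cost J_k(x̂) = Σ_{i=0}^{k} ‖y_i − C_i 𝒯_{i+1,k+1}(x̂)‖²_{Γ_i^{-1}} − Σ_{i=0}^{k} ‖𝒯_{i,k+1}(x̂) − x̂_i‖²_{F_i} + ‖𝒯_{0,k+1}(x̂) − x̂_0‖²_{P_0^{-1}} has a unique global minimizer x̂_{k+1} ∈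 ℝ^n, and these minimizers are given recursively by P_{k+1}^{-1} = A_k^{-ᵀ}(P_k^{-1} − F_k)A_k^{-1} + C_kᵀ Γ_k^{-1} C_k and x̂_{k+1} = A_k x̂_k + B_k u_k + P_{k+1} C_kᵀ Γ_k^{-1}(y_k − C_k(A_k x̂_k + B_k u_k)), where each P_k ∈ ℝ^{n×n} is positive definite. -/
open Matrix Finset

noncomputable section

/-- Forward product `A_{i+d-1} ⋯ A_{i+1} A_i`. -/
def prodA {n : ℕ} (A : ℕ → Matrix (Fin n) (Fin n) ℝ) (i : ℕ) : ℕ → Matrix (Fin n) (Fin n) ℝ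
  | 0 => 1
  | d + 1 => A (i + d) * prodA A i d

/-- State transition matrix `Φ_{k,i}`: `A_{k-1}⋯A_i` for `i < k`, `I` for `i = k`,
and `A_k⁻¹ A_{k+1}⁻¹ ⋯ A_{i-1}⁻¹ = (A_{i-1}⋯A_k)⁻¹` for `k < i`. -/
def Phi {n : ℕ} (A : ℕ → Matrix (Fin n) (Fin n) ℝ) (k i : ℕ) : Matrix (Fin n) (Fin n) ℝ :=
  if i ≤ k then prodA A i (k - i) else (prodA A k (i - k))⁻¹

/-- State transition function `𝒯_{k,i}`. -/
def Tfun {n m : ℕ} (A : ℕ → Matrix (Fin n) (Fin n) ℝ) (B : ℕ → Matrix (Fin n) (Fin m) ℝ)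
    (u : ℕ → Fin m → ℝ) (k i : ℕ) (x : Fin n → ℝ) : Fin n → ℝ :=
  if i ≤ k then Phi A k i *ᵥ x + ∑ j ∈ Finset.Ico i k, Phi A k (j + 1) *ᵥ (B j *ᵥ u j)
  else Phi A k i *ᵥ (x - ∑ j ∈ Finset.Ico k i, Phi A i (j + 1) *ᵥ (B j *ᵥ u j))

/-- Weighted squared (semi)norm `‖x‖²_R = xᵀ R x`. -/
def qnorm {q : ℕ} (R : Matrix (Fin q) (Fin q) ℝ) (x : Fin q → ℝ) : ℝ := x ⬝ᵥ (R *ᵥ x)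

/-!
The information matrix `P_k⁻¹` is the quadratic part of the cost `J_{k-1}`, so the whole cost is
`‖x - x̂_k‖²_{P_k⁻¹}` plus a constant. Moving from `J_{k-1}` to `J_k` substitutes
`x ↦ A_k⁻¹(x - B_k u_k)` into it, subtracts the forgetting term `‖·‖²_{F_k}` and adds the new
measurement term; completing the square in this sum of two quadratics gives the update of `P` and
`x̂`. The strict bound on `F_k` says exactly that `P_k⁻¹ - F_k ≻ 0`, so every `P_k⁻¹` is positive
definite, and the minimizer of `‖x - x̂_k‖²_{P_k⁻¹} + c` is unique.
-/

namespace KFLS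

section StateTransition

variable {n m : ℕ} (A : ℕ → Matrix (Fin n) (Fin n) ℝ)

theorem Phi_self (k : ℕ) : Phi A k k = 1 := by
  simp [Phi, prodA]

theorem Phi_eq_inv_prodA {i k : ℕ} (h : i ≤ k) : Phi A i k = (prodA A i (k - i))⁻¹ := by
  rcases h.eq_or_lt with rfl | h
  · simp [Phi, prodA]
  · rw [Phi, if_neg (by omega)]

theorem Phi_succ_right {i k : ℕ} (h : i ≤ k) : Phi A i (k + 1) = Phi A i k * (A k)⁻¹ := by
  rw [Phi_eq_inv_prodA A (by omega), Phi_eq_inv_prodA A h, show k + 1 - i = k - i + 1 by omega,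
    prodA, Nat.add_sub_cancel' h, Matrix.mul_inv_rev]

theorem Phi_succ_left {j k : ℕ} (h : j ≤ k) : Phi A (k + 1) j = A k * Phi A k j := by
  rw [Phi, if_pos (by omega), Phi, if_pos h, show k + 1 - j = k - j + 1 by omega, prodA,
    Nat.add_sub_cancel' h]

variable (B : ℕ → Matrix (Fin n) (Fin m) ℝ) (u : ℕ → Fin m → ℝ)

theorem Tfun_self (k : ℕ) (x : Fin n → ℝ) : Tfun A B u k k x = x := by
  simp [Tfun, Phi_self]

theorem Tfun_succ_right {i k : ℕ} (hA : IsUnit (A k).det) (h : i ≤ k) (x : Fin n → ℝ) :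
    Tfun A B u i (k + 1) x = Tfun A B u i k ((A k)⁻¹ *ᵥ (x - B k *ᵥ u k)) := by
  rcases h.eq_or_lt with rfl | hik
  · rw [Tfun, if_neg (by omega), Tfun_self]
    simp [Phi_self, Phi_succ_right A le_rfl]
  rw [Tfun, if_neg (by omega), Tfun, if_neg (by omega), Nat.Ico_succ_right_eq_insert_Ico h,
    sum_insert (by simp), Phi_self, one_mulVec, Phi_succ_right A hik.le, ← mulVec_mulVec]
  have hsum : ∑ j ∈ Ico i k, Phi A (k + 1) (j + 1) *ᵥ (B j *ᵥ u j)
      = A k *ᵥ ∑ j ∈ Ico i k, Phi A k (j + 1) *ᵥ (B j *ᵥ u j) := by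
    rw [mulVec_sum]
    refine sum_congr rfl fun j hj => ?_
    rw [Phi_succ_left A (mem_Ico.mp hj).2, ← mulVec_mulVec]
  rw [hsum, ← sub_sub, mulVec_sub (A k)⁻¹ (x - _), mulVec_mulVec, nonsing_inv_mul _ hA,
    one_mulVec]

end StateTransition

section QuadraticForm

variable {q r s : ℕ}

theorem qnorm_zero (R : Matrix (Fin q) (Fin q) ℝ) : qnorm R 0 = 0 := by
  simp [qnorm]

theorem qnorm_pos {R : Matrix (Fin q) (Fin q) ℝ} (hR : R.PosDef) {x : Fin q → ℝ} (hx : x ≠ 0) :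
    0 < qnorm R x := by
  unfold qnorm
  simpa only [star_trivial] using hR.dotProduct_mulVec_pos hx

theorem qnorm_matrix_add (R S : Matrix (Fin q) (Fin q) ℝ) (x : Fin q → ℝ) :
    qnorm (R + S) x = qnorm R x + qnorm S x := by
  simp [qnorm, add_mulVec, dotProduct_add]

theorem qnorm_matrix_sub (R S : Matrix (Fin q) (Fin q) ℝ) (x : Fin q → ℝ) :
    qnorm (R - S) x = qnorm R x - qnorm S x := by
  simp [qnorm, sub_mulVec, dotProduct_sub]

theorem qnorm_mulVec (R : Matrix (Fin r) (Fin r) ℝ) (L : Matrix (Fin r) (Fin q) ℝ)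
    (x : Fin q → ℝ) : qnorm R (L *ᵥ x) = qnorm (Lᵀ * R * L) x := by
  simp only [qnorm, ← mulVec_mulVec, dotProduct_mulVec _ Lᵀ, vecMul_transpose]

theorem dotProduct_mulVec_comm (R : Matrix (Fin q) (Fin r) ℝ) (v : Fin q → ℝ) (w : Fin r → ℝ) :
    v ⬝ᵥ (R *ᵥ w) = w ⬝ᵥ (Rᵀ *ᵥ v) := by
  rw [dotProduct_mulVec, ← mulVec_transpose, dotProduct_comm]

theorem qnorm_sub {R : Matrix (Fin q) (Fin q) ℝ} (hR : R.IsSymm) (v w : Fin q → ℝ) :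
    qnorm R (v - w) = qnorm R v - 2 * (v ⬝ᵥ (R *ᵥ w)) + qnorm R w := by
  have hcross : w ⬝ᵥ (R *ᵥ v) = v ⬝ᵥ (R *ᵥ w) := by
    rw [dotProduct_mulVec_comm, hR.eq]
  simp only [qnorm, mulVec_sub, dotProduct_sub, sub_dotProduct, hcross]
  ring

theorem qnorm_add_qnorm_complete_square (W : Matrix (Fin s) (Fin s) ℝ)
    (L : Matrix (Fin s) (Fin q) ℝ) {G : Matrix (Fin r) (Fin r) ℝ} (H : Matrix (Fin r) (Fin q) ℝ)
    {M : Matrix (Fin q) (Fin q) ℝ} (hG : G.IsSymm) (hMs : M.IsSymm) (hMu : IsUnit M.det)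
    (hM : M = Lᵀ * W * L + Hᵀ * G * H) (x₀ : Fin q → ℝ) (z : Fin r → ℝ) :
    ∃ c, ∀ x, qnorm W (L *ᵥ (x - x₀)) + qnorm G (z - H *ᵥ x)
      = qnorm M (x - (x₀ + M⁻¹ *ᵥ (Hᵀ *ᵥ (G *ᵥ (z - H *ᵥ x₀))))) + c := by
  set e := z - H *ᵥ x₀
  set b := Hᵀ *ᵥ (G *ᵥ e)
  have hMb : M *ᵥ (M⁻¹ *ᵥ b) = b := by
    rw [mulVec_mulVec, mul_nonsing_inv _ hMu, one_mulVec]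
  refine ⟨qnorm G e - qnorm M⁻¹ b, fun x => ?_⟩
  set d := x - x₀
  have hres : z - H *ᵥ x = e - H *ᵥ d := by
    simp only [e, d, mulVec_sub]
    abel
  have hcross : e ⬝ᵥ (G *ᵥ (H *ᵥ d)) = d ⬝ᵥ b := by
    rw [dotProduct_mulVec_comm, hG.eq, dotProduct_comm, dotProduct_mulVec_comm H]
  have hquad : qnorm M d = qnorm W (L *ᵥ d) + qnorm G (H *ᵥ d) := by
    rw [hM, qnorm_matrix_add, qnorm_mulVec, qnorm_mulVec]
  have hconst : qnorm M (M⁻¹ *ᵥ b) = qnorm M⁻¹ b := by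
    rw [qnorm, hMb, dotProduct_comm, qnorm]
  rw [hres, sub_add_eq_sub_sub, qnorm_sub hG, qnorm_sub hMs, hMb,
    hcross, hconst, hquad]
  ring

end QuadraticForm
section Estimator

variable {n m p : ℕ} (A : ℕ → Matrix (Fin n) (Fin n) ℝ) (B : ℕ → Matrix (Fin n) (Fin m) ℝ)
  (C : ℕ → Matrix (Fin p) (Fin n) ℝ) (Γ : ℕ → Matrix (Fin p) (Fin p) ℝ)
  (F : ℕ → Matrix (Fin n) (Fin n) ℝ) (P₀ : Matrix (Fin n) (Fin n) ℝ)
  (u : ℕ → Fin m → ℝ) (y : ℕ → Fin p → ℝ) (xhat₀ : Fin n → ℝ)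

/-- The closed form of `P_k⁻¹`, as it appears in the bound on `F_k`. -/
def infoMatrix (k : ℕ) : Matrix (Fin n) (Fin n) ℝ :=
  (Phi A 0 k)ᵀ * P₀⁻¹ * Phi A 0 k
    + ∑ i ∈ range k,
        ((Phi A (i + 1) k)ᵀ * (C i)ᵀ * (Γ i)⁻¹ * C i * Phi A (i + 1) k
          - (Phi A i k)ᵀ * F i * Phi A i k)

theorem infoMatrix_zero : infoMatrix A C Γ F P₀ 0 = P₀⁻¹ := by
  simp [infoMatrix, Phi_self]

theorem infoMatrix_succ (k : ℕ) :
    infoMatrix A C Γ F P₀ (k + 1)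
      = ((A k)⁻¹)ᵀ * (infoMatrix A C Γ F P₀ k - F k) * (A k)⁻¹ + (C k)ᵀ * (Γ k)⁻¹ * C k := by
  have hterm : ∀ i ∈ range k,
      (Phi A (i + 1) (k + 1))ᵀ * (C i)ᵀ * (Γ i)⁻¹ * C i * Phi A (i + 1) (k + 1)
        - (Phi A i (k + 1))ᵀ * F i * Phi A i (k + 1)
      = ((A k)⁻¹)ᵀ * ((Phi A (i + 1) k)ᵀ * (C i)ᵀ * (Γ i)⁻¹ * C i * Phi A (i + 1) k
          - (Phi A i k)ᵀ * F i * Phi A i k) * (A k)⁻¹ := by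
    intro i hi
    have hik : i < k := mem_range.mp hi
    rw [Phi_succ_right A hik, Phi_succ_right A hik.le, transpose_mul, transpose_mul]
    simp only [mul_sub, sub_mul, Matrix.mul_assoc]
  rw [infoMatrix, sum_range_succ, sum_congr rfl hterm, ← sum_mul, ← mul_sum, Phi_self,
    Phi_succ_right A le_rfl, Phi_self, Phi_succ_right A k.zero_le, infoMatrix, transpose_mul]
  simp only [transpose_one, Matrix.mul_one, Matrix.one_mul, mul_sub, sub_mul, mul_add, add_mul,
    Matrix.mul_assoc]
  abel

/-- The recursive estimates `x̂_k`, with `P_k = (infoMatrix k)⁻¹`. -/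
def estimate : ℕ → Fin n → ℝ
  | 0 => xhat₀
  | k + 1 =>
      A k *ᵥ estimate k + B k *ᵥ u k
        + (infoMatrix A C Γ F P₀ (k + 1))⁻¹ *ᵥ ((C k)ᵀ *ᵥ ((Γ k)⁻¹ *ᵥ
            (y k - C k *ᵥ (A k *ᵥ estimate k + B k *ᵥ u k))))

/-- `cost xh (k + 1)` is the cost `J_k` of the theorem, and `cost xh 0` is the prior term. -/
def cost (xh : ℕ → Fin n → ℝ) (k : ℕ) (x : Fin n → ℝ) : ℝ :=
  (∑ i ∈ range k, qnorm (Γ i)⁻¹ (y i - C i *ᵥ Tfun A B u (i + 1) k x))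
    - (∑ i ∈ range k, qnorm (F i) (Tfun A B u i k x - xh i))
    + qnorm P₀⁻¹ (Tfun A B u 0 k x - xhat₀)

theorem cost_zero (xh : ℕ → Fin n → ℝ) (x : Fin n → ℝ) :
    cost A B C Γ F P₀ u y xhat₀ xh 0 x = qnorm P₀⁻¹ (x - xhat₀) := by
  simp [cost, Tfun_self]

theorem cost_succ (xh : ℕ → Fin n → ℝ) {k : ℕ} (hA : IsUnit (A k).det) (x : Fin n → ℝ) :
    cost A B C Γ F P₀ u y xhat₀ xh (k + 1) x
      = cost A B C Γ F P₀ u y xhat₀ xh k ((A k)⁻¹ *ᵥ (x - B k *ᵥ u k))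
        + qnorm (Γ k)⁻¹ (y k - C k *ᵥ x)
        - qnorm (F k) ((A k)⁻¹ *ᵥ (x - B k *ᵥ u k) - xh k) := by
  set z := (A k)⁻¹ *ᵥ (x - B k *ᵥ u k)
  have hT : ∀ i ≤ k, Tfun A B u i (k + 1) x = Tfun A B u i k z :=
    fun i hi => Tfun_succ_right A B u hA hi x
  have hmeasure : ∑ i ∈ range k, qnorm (Γ i)⁻¹ (y i - C i *ᵥ Tfun A B u (i + 1) (k + 1) x)
      = ∑ i ∈ range k, qnorm (Γ i)⁻¹ (y i - C i *ᵥ Tfun A B u (i + 1) k z) :=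
    sum_congr rfl fun i hi => by rw [hT (i + 1) (mem_range.mp hi)]
  have hforget : ∑ i ∈ range k, qnorm (F i) (Tfun A B u i (k + 1) x - xh i)
      = ∑ i ∈ range k, qnorm (F i) (Tfun A B u i k z - xh i) :=
    sum_congr rfl fun i hi => by rw [hT i (mem_range.mp hi).le]
  rw [cost, sum_range_succ, sum_range_succ, hmeasure, hforget, hT 0 k.zero_le, hT k le_rfl,
    Tfun_self, Tfun_self, cost]
  ring

theorem cost_estimate_eq_qnorm_add (hA : ∀ k, IsUnit (A k).det) (hΓ : ∀ k, (Γ k).IsSymm)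
    (hMs : ∀ k, (infoMatrix A C Γ F P₀ k).IsSymm)
    (hMu : ∀ k, IsUnit (infoMatrix A C Γ F P₀ k).det) (k : ℕ) :
    ∃ c, ∀ x, cost A B C Γ F P₀ u y xhat₀ (estimate A B C Γ F P₀ u y xhat₀) k x
      = qnorm (infoMatrix A C Γ F P₀ k) (x - estimate A B C Γ F P₀ u y xhat₀ k) + c := by
  set xh := estimate A B C Γ F P₀ u y xhat₀
  induction k with
  | zero => exact ⟨0, fun x => by rw [cost_zero, infoMatrix_zero, add_zero]; rfl⟩
  | succ k ih =>
    obtain ⟨c, hc⟩ := ih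
    set xb := A k *ᵥ xh k + B k *ᵥ u k
    obtain ⟨c', hc'⟩ := qnorm_add_qnorm_complete_square (infoMatrix A C Γ F P₀ k - F k)
      (A k)⁻¹ (C k) (hΓ k).inv (hMs (k + 1)) (hMu (k + 1)) (infoMatrix_succ A C Γ F P₀ k) xb (y k)
    refine ⟨c + c', fun x => ?_⟩
    have hprior : (A k)⁻¹ *ᵥ (x - B k *ᵥ u k) - xh k = (A k)⁻¹ *ᵥ (x - xb) := by
      rw [show x - xb = x - B k *ᵥ u k - A k *ᵥ xh k by simp only [xb]; abel,
        mulVec_sub (A k)⁻¹ (x - B k *ᵥ u k), mulVec_mulVec, nonsing_inv_mul _ (hA k), one_mulVec]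
    have hsplit := qnorm_matrix_sub (infoMatrix A C Γ F P₀ k) (F k) ((A k)⁻¹ *ᵥ (x - xb))
    rw [cost_succ A B C Γ F P₀ u y xhat₀ xh (hA k), hc, hprior]
    change _ = qnorm _ (x - (xb + _)) + _
    linarith [hc' x]

end Estimator

end KFLS

theorem kfls_recursive_minimizer_general (n m p : ℕ)
    (A : ℕ → Matrix (Fin n) (Fin n) ℝ) (hA : ∀ k, IsUnit (A k).det)
    (B : ℕ → Matrix (Fin n) (Fin m) ℝ) (C : ℕ → Matrix (Fin p) (Fin n) ℝ)
    (Γ : ℕ → Matrix (Fin p) (Fin p) ℝ) (hΓ : ∀ k, (Γ k).PosDef)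
    (u : ℕ → Fin m → ℝ) (y : ℕ → Fin p → ℝ)
    (P₀ : Matrix (Fin n) (Fin n) ℝ) (hP₀ : P₀.PosDef) (xhat₀ : Fin n → ℝ)
    (F : ℕ → Matrix (Fin n) (Fin n) ℝ) (hFpsd : ∀ k, (F k).PosSemidef)
    (hFlt : ∀ k,
      ((Phi A 0 k)ᵀ * P₀⁻¹ * Phi A 0 k
        + ∑ i ∈ Finset.range k,
            ((Phi A (i + 1) k)ᵀ * (C i)ᵀ * (Γ i)⁻¹ * C i * Phi A (i + 1) k
              - (Phi A i k)ᵀ * F i * Phi A i k)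
        - F k).PosDef) :
    ∃ (xh : ℕ → Fin n → ℝ) (P : ℕ → Matrix (Fin n) (Fin n) ℝ),
      xh 0 = xhat₀ ∧ P 0 = P₀ ∧
      (∀ k, (P k).PosDef) ∧
      (∀ k, (P (k + 1))⁻¹
          = ((A k)⁻¹)ᵀ * ((P k)⁻¹ - F k) * (A k)⁻¹ + (C k)ᵀ * (Γ k)⁻¹ * C k) ∧
      (∀ k, xh (k + 1)
          = A k *ᵥ xh k + B k *ᵥ u k
            + P (k + 1) *ᵥ ((C k)ᵀ *ᵥ ((Γ k)⁻¹ *ᵥ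
                (y k - C k *ᵥ (A k *ᵥ xh k + B k *ᵥ u k))))) ∧
      (∀ k, ∀ x : Fin n → ℝ, x ≠ xh (k + 1) →
        ((∑ i ∈ Finset.range (k + 1),
            qnorm (Γ i)⁻¹ (y i - C i *ᵥ Tfun A B u (i + 1) (k + 1) (xh (k + 1))))
          - (∑ i ∈ Finset.range (k + 1),
              qnorm (F i) (Tfun A B u i (k + 1) (xh (k + 1)) - xh i))
          + qnorm P₀⁻¹ (Tfun A B u 0 (k + 1) (xh (k + 1)) - xhat₀))
        <
        ((∑ i ∈ Finset.range (k + 1),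
            qnorm (Γ i)⁻¹ (y i - C i *ᵥ Tfun A B u (i + 1) (k + 1) x))
          - (∑ i ∈ Finset.range (k + 1),
              qnorm (F i) (Tfun A B u i (k + 1) x - xh i))
          + qnorm P₀⁻¹ (Tfun A B u 0 (k + 1) x - xhat₀))) := by
  have hW : ∀ k, (KFLS.infoMatrix A C Γ F P₀ k - F k).PosDef := hFlt
  have hM : ∀ k, (KFLS.infoMatrix A C Γ F P₀ k).PosDef := fun k => by
    simpa only [sub_add_cancel] using (hW k).add_posSemidef (hFpsd k)
  have hMu : ∀ k, IsUnit (KFLS.infoMatrix A C Γ F P₀ k).det :=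
    fun k => (isUnit_iff_isUnit_det _).mp (hM k).isUnit
  have hquad := KFLS.cost_estimate_eq_qnorm_add A B C Γ F P₀ u y xhat₀ hA
    (fun k => isHermitian_iff_isSymm.mp (hΓ k).isHermitian)
    (fun k => isHermitian_iff_isSymm.mp (hM k).isHermitian) hMu
  refine ⟨KFLS.estimate A B C Γ F P₀ u y xhat₀, fun k => (KFLS.infoMatrix A C Γ F P₀ k)⁻¹, rfl,
    ?_, fun k => (hM k).inv, fun k => ?_, fun k => rfl, fun k x hx => ?_⟩
  · beta_reduce
    rw [KFLS.infoMatrix_zero, nonsing_inv_nonsing_inv _ ((isUnit_iff_isUnit_det _).mp hP₀.isUnit)]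
  · rw [nonsing_inv_nonsing_inv _ (hMu (k + 1)), nonsing_inv_nonsing_inv _ (hMu k),
      KFLS.infoMatrix_succ]
  · obtain ⟨c, hc⟩ := hquad (k + 1)
    change KFLS.cost A B C Γ F P₀ u y xhat₀ _ (k + 1) _ < KFLS.cost A B C Γ F P₀ u y xhat₀ _ (k + 1) _
    rw [hc, hc, sub_self, KFLS.qnorm_zero]
    linarith [KFLS.qnorm_pos (hM (k + 1)) (sub_ne_zero.mpr hx)]

/-- **Theorem 1 (KFLS).** Under the positive-semidefinite forgetting matrices `F k` satisfying
the strict bound (eqn: Pinv - F is pos def), there exist sequences `xh` (state estimates,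
starting at `xhat₀`) and `P` (positive-definite covariances, starting at `P₀`) satisfying the
recursions (eqn: KFRLS Pinv Update) and (eqn: KFRLS x Update), such that for every `k ≥ 0`
the estimate `xh (k+1)` is the unique global minimizer of the KFLS cost `J_k`. -/
theorem kfls_recursive_minimizer (n m p : ℕ) (hn : 0 < n) (hm : 0 < m) (hp : 0 < p)
    (A : ℕ → Matrix (Fin n) (Fin n) ℝ) (hA : ∀ k, IsUnit (A k).det)
    (B : ℕ → Matrix (Fin n) (Fin m) ℝ) (C : ℕ → Matrix (Fin p) (Fin n) ℝ)
    (Γ : ℕ → Matrix (Fin p) (Fin p) ℝ) (hΓ : ∀ k, (Γ k).PosDef)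
    (u : ℕ → Fin m → ℝ) (y : ℕ → Fin p → ℝ)
    (P₀ : Matrix (Fin n) (Fin n) ℝ) (hP₀ : P₀.PosDef) (xhat₀ : Fin n → ℝ)
    (F : ℕ → Matrix (Fin n) (Fin n) ℝ) (hFpsd : ∀ k, (F k).PosSemidef)
    (hFlt : ∀ k,
      ((Phi A 0 k)ᵀ * P₀⁻¹ * Phi A 0 k
        + ∑ i ∈ Finset.range k,
            ((Phi A (i + 1) k)ᵀ * (C i)ᵀ * (Γ i)⁻¹ * C i * Phi A (i + 1) k
              - (Phi A i k)ᵀ * F i * Phi A i k)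
        - F k).PosDef) :
    ∃ (xh : ℕ → Fin n → ℝ) (P : ℕ → Matrix (Fin n) (Fin n) ℝ),
      xh 0 = xhat₀ ∧ P 0 = P₀ ∧
      (∀ k, (P k).PosDef) ∧
      (∀ k, (P (k + 1))⁻¹
          = ((A k)⁻¹)ᵀ * ((P k)⁻¹ - F k) * (A k)⁻¹ + (C k)ᵀ * (Γ k)⁻¹ * C k) ∧
      (∀ k, xh (k + 1)
          = A k *ᵥ xh k + B k *ᵥ u k
            + P (k + 1) *ᵥ ((C k)ᵀ *ᵥ ((Γ k)⁻¹ *ᵥ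
                (y k - C k *ᵥ (A k *ᵥ xh k + B k *ᵥ u k))))) ∧
      (∀ k, ∀ x : Fin n → ℝ, x ≠ xh (k + 1) →
        ((∑ i ∈ Finset.range (k + 1),
            qnorm (Γ i)⁻¹ (y i - C i *ᵥ Tfun A B u (i + 1) (k + 1) (xh (k + 1))))
          - (∑ i ∈ Finset.range (k + 1),
              qnorm (F i) (Tfun A B u i (k + 1) (xh (k + 1)) - xh i))
          + qnorm P₀⁻¹ (Tfun A B u 0 (k + 1) (xh (k + 1)) - xhat₀))
        <
        ((∑ i ∈ Finset.range (k + 1),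
            qnorm (Γ i)⁻¹ (y i - C i *ᵥ Tfun A B u (i + 1) (k + 1) x))
          - (∑ i ∈ Finset.range (k + 1),
              qnorm (F i) (Tfun A B u i (k + 1) x - xh i))
          + qnorm P₀⁻¹ (Tfun A B u 0 (k + 1) x - xhat₀))) :=
  kfls_recursive_minimizer_general n m p A hA B C Γ hΓ u y P₀ hP₀ xhat₀ F hFpsd hFlt
end
end

section
/- Let A ∈ ℝ^{n×n} be nonsingular, P ∈ ℝ^{n×n} positive definite, F ∈ ℝ^{n×n} symmetric with P^{-1} − F positive definite, and define Σ = A[(P^{-1} − F)^{-1} − P]Aᵀ. Then Σ is positive definite if and only if F is positive definite. -/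
/-!
Congruence by the invertible `A` reduces the claim to `Q⁻¹ - P ≻ 0 ↔ F ≻ 0` with `Q = P⁻¹ - F`.
Since `F = P⁻¹ - Q`, this is strict antitonicity of inversion on positive definite matrices,
used in both directions. Antitonicity follows from the identity
`Y⁻¹ - X⁻¹ = X⁻¹ (D + D Y⁻¹ D) X⁻¹` with `D = X - Y`.
-/

open Matrix

section

variable {n : Type*} [Fintype n] [DecidableEq n]

theorem Matrix.inv_sub_inv_eq_mul_mul {R : Type*} [CommRing R] {X Y : Matrix n n R}
    (hX : IsUnit X) (hY : IsUnit Y) :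
    Y⁻¹ - X⁻¹ = X⁻¹ * (X - Y + (X - Y) * Y⁻¹ * (X - Y)) * X⁻¹ := by
  rw [isUnit_iff_isUnit_det] at hX hY
  simp only [mul_add, add_mul, mul_sub, sub_mul, Matrix.mul_assoc, nonsing_inv_mul _ hX,
    nonsing_inv_mul _ hY, mul_nonsing_inv _ hX, mul_nonsing_inv _ hY, Matrix.mul_one,
    Matrix.one_mul, nonsing_inv_mul_cancel_left _ _ hX]
  abel

variable {K : Type*} [Field K] [PartialOrder K] [StarRing K] [AddLeftMono K]

theorem Matrix.PosDef.inv_sub_inv_of_sub {X Y : Matrix n n K} (hX : X.PosDef)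
    (hY : Y.PosDef) (hXY : (X - Y).PosDef) : (Y⁻¹ - X⁻¹).PosDef := by
  have hD : (X - Y + (X - Y) * Y⁻¹ * (X - Y)).PosDef := by
    refine hXY.add_posSemidef ?_
    simpa [hXY.isHermitian.eq] using hY.inv.posSemidef.conjTranspose_mul_mul_same (X - Y)
  rw [inv_sub_inv_eq_mul_mul hX.isUnit hY.isUnit]
  nth_rw 1 [← hX.inv.isHermitian.eq]
  exact hX.inv.isUnit.posDef_star_left_conjugate_iff.mpr hD

theorem Matrix.PosDef.posDef_inv_sub_comm {X Y : Matrix n n K} (hX : X.PosDef)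
    (hY : Y.PosDef) : (X⁻¹ - Y).PosDef ↔ (Y⁻¹ - X).PosDef := by
  have key {X Y : Matrix n n K} (hX : X.PosDef) (hY : Y.PosDef) (h : (X⁻¹ - Y).PosDef) :
      (Y⁻¹ - X).PosDef := by
    simpa [nonsing_inv_nonsing_inv _ ((isUnit_iff_isUnit_det _).mp hX.isUnit)] using
      hX.inv.inv_sub_inv_of_sub hY h
  exact ⟨key hX hY, key hY hX⟩

end

theorem Sigma_pd_iff_F_pd_general (n : ℕ)
    (A P F : Matrix (Fin n) (Fin n) ℝ) (hA : IsUnit A.det)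
    (hP : P.PosDef) (hPF : (P⁻¹ - F).PosDef)
    (S : Matrix (Fin n) (Fin n) ℝ) (hS : S = A * ((P⁻¹ - F)⁻¹ - P) * Aᵀ) :
    S.PosDef ↔ F.PosDef := by
  have hAT : Aᵀ = star A := (conjTranspose_eq_transpose_of_trivial A).symm
  rw [hS, hAT, ((isUnit_iff_isUnit_det A).mpr hA).posDef_star_right_conjugate_iff,
    hPF.posDef_inv_sub_comm hP, sub_sub_cancel]

/-- **(Proposition 1, definite case).** With `Σ = A[(P⁻¹ − F)⁻¹ − P]Aᵀ`, the matrix `Σ` is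
positive definite if and only if `F` is positive definite. -/
theorem Sigma_pd_iff_F_pd (n : ℕ)
    (A P F : Matrix (Fin n) (Fin n) ℝ) (hA : IsUnit A.det)
    (hP : P.PosDef) (hFsymm : F.IsHermitian) (hPF : (P⁻¹ - F).PosDef)
    (S : Matrix (Fin n) (Fin n) ℝ) (hS : S = A * ((P⁻¹ - F)⁻¹ - P) * Aᵀ) :
    S.PosDef ↔ F.PosDef :=
  Sigma_pd_iff_F_pd_general n A P F hA hP hPF S hS
end
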